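/- arXiv:2406.04502 — 2 statements merged into one kernel-verified Lean document; each statement's English description precedes it below -/
import Mathlib

section
/- The number of fixed-point-free permutations of a set of size 2k+2 with exactly k cycles equals (1/9)·(4k+5)·(k+1)·k·(2k+1)!!. -/
open Equiv Equiv.Perm Finset List
set_option linter.unusedSectionVars false
set_option maxHeartbeats 1000000

section Aux
variable {α β : Type*} [Fintype α] [DecidableEq α] [Fintype β] [DecidableEq β]

theorem cycleType_permCongr' (e : α ≃ β) (σ : Perm α) :
    (e.permCongr σ).cycleType = σ.cycleType := by
  classical
  have h : e.permCongr σ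
      = σ.extendDomain (e.trans (Equiv.subtypeUnivEquiv (fun _ : β => trivial)).symm) := by
    ext b
    rw [Equiv.permCongr_apply]
    rw [Equiv.Perm.extendDomain_apply_subtype _ _ (trivial : (fun _ : β => True) b)]
    simp
  rw [h, Equiv.Perm.cycleType_extendDomain]

noncomputable def D (α : Type*) [Fintype α] [DecidableEq α] (k : ℕ) : ℕ :=
  Nat.card {σ : Perm α // (∀ i, σ i ≠ i) ∧ Multiset.card σ.cycleType = k}

theorem D_congr (e : α ≃ β) (k : ℕ) : D α k = D β k := by
  apply Nat.card_congr
  refine Equiv.subtypeEquiv e.permCongr (fun σ => ?_)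
  have hfp : (∀ i, σ i ≠ i) ↔ (∀ i, e.permCongr σ i ≠ i) := by
    constructor
    · intro h i hi
      rw [Equiv.permCongr_apply] at hi
      apply h (e.symm i)
      have := congrArg e.symm hi
      simpa using this
    · intro h i hi
      apply h (e i)
      rw [Equiv.permCongr_apply]
      simp [hi]
  rw [cycleType_permCongr']
  tauto

theorem D_eq_of_card_eq (h : Fintype.card α = Fintype.card β) (k : ℕ) : D α k = D β k :=
  D_congr (Fintype.equivOfCardEq h) k

/-- splitting a subtype by a further condition -/
def splitEquiv {γ : Type*} (P Q : γ → Prop) [DecidablePred Q] :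
    {x // P x} ≃ {x : γ // P x ∧ Q x} ⊕ {x : γ // P x ∧ ¬ Q x} where
  toFun x := if h : Q x then Sum.inl ⟨x, x.2, h⟩ else Sum.inr ⟨x, x.2, h⟩
  invFun x := Sum.elim (fun y => ⟨y.1, y.2.1⟩) (fun y => ⟨y.1, y.2.1⟩) x
  left_inv x := by by_cases h : Q x <;> simp [h]
  right_inv x := by
    rcases x with y | y
    · simp [y.2.2]
    · simp [y.2.2]

theorem card_ne_ne (a b : α) (hab : a ≠ b) :
    Fintype.card {x : α // x ≠ a ∧ x ≠ b} = Fintype.card α - 2 := by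
  classical
  rw [Fintype.card_subtype]
  have h1 : (univ.filter fun x : α => x ≠ a ∧ x ≠ b) = univ \ {a, b} := by
    ext x
    simp [not_or]
  rw [h1, card_sdiff_of_subset (subset_univ _), card_univ]
  congr 1
  rw [card_insert_of_notMem (by simpa using hab), card_singleton]

theorem card_ne (a : α) :
    Fintype.card {x : α // x ≠ a} = Fintype.card α - 1 := by
  classical
  rw [Fintype.card_subtype]
  have h1 : (univ.filter fun x : α => x ≠ a) = univ \ {a} := by
    ext x
    simp
  rw [h1, card_sdiff_of_subset (subset_univ _), card_univ, card_singleton]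

end Aux

section Main
variable {α : Type*} [Fintype α] [DecidableEq α]

/-- The subtype equivalence underlying `D_congr`. -/
noncomputable def DEquiv {β : Type*} [Fintype β] [DecidableEq β] (e : α ≃ β) (k : ℕ) :
    {σ : Perm α // (∀ i, σ i ≠ i) ∧ Multiset.card σ.cycleType = k}
      ≃ {σ : Perm β // (∀ i, σ i ≠ i) ∧ Multiset.card σ.cycleType = k} := by
  refine Equiv.subtypeEquiv e.permCongr (fun σ => ?_)
  have hfp : (∀ i, σ i ≠ i) ↔ (∀ i, e.permCongr σ i ≠ i) := by
    constructor
    · intro h i hi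
      rw [Equiv.permCongr_apply] at hi
      apply h (e.symm i)
      have := congrArg e.symm hi
      simpa using this
    · intro h i hi
      apply h (e i)
      rw [Equiv.permCongr_apply]
      simp [hi]
  rw [cycleType_permCongr']
  tauto

theorem helper_disjoint (a b : α) (τ : Perm {x : α // x ≠ a ∧ x ≠ b}) :
    Perm.Disjoint (swap a b) (ofSubtype τ) := by
  intro y
  by_cases hy : y = a ∨ y = b
  · right
    apply ofSubtype_apply_of_not_mem
    intro hc
    rcases hy with rfl | rfl
    · exact hc.1 rfl
    · exact hc.2 rfl
  · left
    push_neg at hy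
    exact swap_apply_of_ne_of_ne hy.1 hy.2

theorem ofSubtype_ne_apply {p : α → Prop} [DecidablePred p] (τ : Perm (Subtype p))
    (y : α) (hy : p y) : ofSubtype τ y = (τ ⟨y, hy⟩ : α) :=
  ofSubtype_apply_of_mem τ hy

theorem card_cycleType_swap (a b : α) (hab : a ≠ b) :
    Multiset.card (swap a b).cycleType = 1 := by
  rw [(isCycle_swap hab).cycleType]
  simp

theorem card_cycleType_swap_mul (f : Perm α) (a b : α) (hab : a ≠ b)
    (ha : f a = a) (hb : f b ≠ b) :
    Multiset.card (swap a b * f).cycleType = Multiset.card f.cycleType := by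
  classical
  set c := f.cycleOf b with hc
  set g := f * c⁻¹ with hgdef
  have hgapp : ∀ y, g y = if f.SameCycle b y then y else f y := by
    intro y
    by_cases h : f.SameCycle b y
    · have h1 : c⁻¹ y = f⁻¹ y := by
        rw [hc, cycleOf_inv, cycleOf_apply, if_pos (sameCycle_inv.mpr h)]
      rw [hgdef, mul_apply, h1, (by simp : f (f⁻¹ y) = y), if_pos h]
    · have h1 : c⁻¹ y = y := by
        rw [hc, cycleOf_inv, cycleOf_apply, if_neg (fun hh => h (sameCycle_inv.mp hh))]
      rw [hgdef, mul_apply, h1, if_neg h]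
  have hfg : f = c * g := by
    ext y
    by_cases h : f.SameCycle b y
    · rw [mul_apply, hgapp y, if_pos h, hc, cycleOf_apply, if_pos h]
    · rw [mul_apply, hgapp y, if_neg h, hc, cycleOf_apply,
        if_neg (fun hh => h (sameCycle_apply_right.mp hh))]
  have hdisj_cg : Perm.Disjoint c g := by
    intro y
    by_cases h : f.SameCycle b y
    · right; rw [hgapp y, if_pos h]
    · left; rw [hc, cycleOf_apply, if_neg h]
  have hbsupp : b ∈ f.support := mem_support.mpr hb
  have hlen : 2 ≤ (toList f b).length := by
    rw [Perm.length_toList]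
    exact two_le_card_support_cycleOf_iff.mpr hb
  have hnodup := nodup_toList f b
  have hal : a ∉ toList f b := by
    intro hmem
    rw [mem_toList_iff] at hmem
    exact (mem_support.mp (hmem.1.mem_support_iff.mp hbsupp)) ha
  have hform : (toList f b).formPerm = c := formPerm_toList f b
  -- destructure the list
  obtain ⟨t, hlt⟩ : ∃ t, toList f b = b :: t := by
    cases hl : toList f b with
    | nil => rw [hl] at hlen; simp at hlen
    | cons x t =>
      have h1 := List.get_of_eq hl ⟨0, by omega⟩
      rw [List.get_eq_getElem, getElem_toList] at h1
      simp at h1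
      rw [h1]
      exact ⟨t, rfl⟩
  rw [hlt] at hnodup hal hform hlen
  have hnodup' : (a :: b :: t).Nodup := by
    rw [List.nodup_cons]; exact ⟨hal, hnodup⟩
  have hswapc : swap a b * c = (a :: b :: t).formPerm := by
    rw [List.formPerm_cons_cons, hform]
  have hcycle' : IsCycle (swap a b * c) := by
    rw [hswapc]
    exact List.isCycle_formPerm hnodup' (by simp)
  have hsupp' : (swap a b * c).support = (a :: b :: t).toFinset := by
    rw [hswapc]
    exact List.support_formPerm_of_nodup _ hnodup' (by intro x hx; simp at hx)
  have hdisj' : Perm.Disjoint (swap a b * c) g := by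
    intro y
    by_cases hy : y ∈ (a :: b :: t).toFinset
    · right
      simp only [List.mem_toFinset, List.mem_cons] at hy
      rcases hy with rfl | hy
      · rw [hgapp y]; split <;> simp [ha]
      · have hyt : y ∈ toList f b := by rw [hlt]; simpa using hy
        rw [mem_toList_iff] at hyt
        rw [hgapp y, if_pos hyt.1]
    · left
      rw [← hsupp'] at hy
      exact notMem_support.mp hy
  have hmain : swap a b * f = (swap a b * c) * g := by rw [hfg, mul_assoc]
  have hccyc : IsCycle c := isCycle_cycleOf f hb
  rw [hmain, hdisj'.cycleType_mul, hfg, hdisj_cg.cycleType_mul, Multiset.card_add, Multiset.card_add,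
    hcycle'.cycleType, hccyc.cycleType]
  simp

theorem swap_mul_spec1 (a b : α) (hab : a ≠ b) (τ : Perm {x : α // x ≠ a ∧ x ≠ b}) :
    (swap a b * ofSubtype τ) a = b ∧ (swap a b * ofSubtype τ) b = a ∧
      (∀ (y : α) (h1 : y ≠ a) (h2 : y ≠ b),
        (swap a b * ofSubtype τ) y = (τ ⟨y, h1, h2⟩ : α)) ∧
      Multiset.card (swap a b * ofSubtype τ).cycleType
        = 1 + Multiset.card τ.cycleType := by
  have hofa : ofSubtype τ a = a := ofSubtype_apply_of_not_mem τ (by simp)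
  have hofb : ofSubtype τ b = b := ofSubtype_apply_of_not_mem τ (by simp)
  refine ⟨?_, ?_, ?_, ?_⟩
  · rw [mul_apply, hofa, swap_apply_left]
  · rw [mul_apply, hofb, swap_apply_right]
  · intro y h1 h2
    rw [mul_apply, ofSubtype_ne_apply τ y ⟨h1, h2⟩]
    exact swap_apply_of_ne_of_ne (τ ⟨y, h1, h2⟩).2.1 (τ ⟨y, h1, h2⟩).2.2
  · rw [(helper_disjoint a b τ).cycleType_mul, Multiset.card_add,
      card_cycleType_swap a b hab, cycleType_ofSubtype]

theorem count_T1 (a : α) (k : ℕ) :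
    Nat.card {σ : Perm α //
        ((∀ i, σ i ≠ i) ∧ Multiset.card σ.cycleType = k + 1) ∧ σ (σ a) = a}
      = (Fintype.card α - 1) * D (Fin (Fintype.card α - 2)) k := by
  classical
  set n := Fintype.card α with hn
  set T1 := {σ : Perm α //
      ((∀ i, σ i ≠ i) ∧ Multiset.card σ.cycleType = k + 1) ∧ σ (σ a) = a} with hT1
  let S : {b : α // b ≠ a} → Type _ := fun b =>
    {τ : Perm {x : α // x ≠ a ∧ x ≠ (b : α)} //
      (∀ i, τ i ≠ i) ∧ Multiset.card τ.cycleType = k}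
  -- the map
  have habf : ∀ b : {b : α // b ≠ a}, a ≠ (b : α) := fun b => (b.2).symm
  let F : (Σ b : {b : α // b ≠ a}, S b) → T1 := by
    rintro ⟨b, τ, hτ1, hτ2⟩
    refine ⟨swap a (b : α) * ofSubtype τ, ⟨⟨?_, ?_⟩, ?_⟩⟩
    · obtain ⟨h1, h2, h3, _⟩ := swap_mul_spec1 a (b : α) (habf b) τ
      intro y
      by_cases hy1 : y = a
      · rw [hy1, h1]; exact b.2
      by_cases hy2 : y = (b : α)
      · rw [hy2, h2]; exact habf b
      · rw [h3 y hy1 hy2]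
        intro hc
        exact hτ1 ⟨y, hy1, hy2⟩ (Subtype.ext hc)
    · obtain ⟨_, _, _, h4⟩ := swap_mul_spec1 a (b : α) (habf b) τ
      rw [h4, hτ2, add_comm]
    · obtain ⟨h1, h2, _, _⟩ := swap_mul_spec1 a (b : α) (habf b) τ
      rw [h1, h2]
  have hFinj : Function.Injective F := by
    rintro ⟨b, τ, hτ1, hτ2⟩ ⟨b', τ', hτ1', hτ2'⟩ hFF
    have hval : swap a (b : α) * ofSubtype τ = swap a (b' : α) * ofSubtype τ' :=
      congrArg Subtype.val hFF
    have hb : (b : α) = (b' : α) := by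
      have h1 := (swap_mul_spec1 a (b : α) (habf b) τ).1
      have h1' := (swap_mul_spec1 a (b' : α) (habf b') τ').1
      rw [← h1, ← h1', hval]
    have hbb : b = b' := Subtype.ext hb
    subst hbb
    have hof : ofSubtype τ = ofSubtype τ' := mul_left_cancel hval
    have : τ = τ' := by
      ext x
      have h1 : ofSubtype τ (x : α) = ofSubtype τ' (x : α) := by rw [hof]
      rw [ofSubtype_ne_apply τ _ x.2, ofSubtype_ne_apply τ' _ x.2] at h1
      have h2 : τ ⟨x.1, x.2⟩ = τ' ⟨x.1, x.2⟩ := Subtype.ext h1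
      exact congrArg Subtype.val (by simpa using h2)
    subst this
    rfl
  have hFsurj : Function.Surjective F := by
    rintro ⟨σ, ⟨hfp, hcard⟩, hQ⟩
    set b := σ a with hbdef
    have hba : b ≠ a := hfp a
    have hσb : σ b = a := hQ
    have hab : a ≠ b := hba.symm
    -- the reduced permutation
    set f := swap a b * σ with hfdef
    have hfa : f a = a := by rw [hfdef, mul_apply, ← hbdef, swap_apply_right]
    have hfb : f b = b := by rw [hfdef, mul_apply, hσb, swap_apply_left]
    have hstable : ∀ x : α, (x ≠ a ∧ x ≠ b) ↔ (f x ≠ a ∧ f x ≠ b) := by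
      intro x
      constructor
      · rintro ⟨h1, h2⟩
        exact ⟨fun hc => h1 (f.injective (hc.trans hfa.symm)),
          fun hc => h2 (f.injective (hc.trans hfb.symm))⟩
      · rintro ⟨h1, h2⟩
        constructor
        · intro hc; subst hc; exact h1 hfa
        · intro hc; subst hc; exact h2 hfb
    have hstable' : ∀ x : α, ¬(x ≠ a ∧ x ≠ b) → f x = x := by
      intro x hx
      rcases not_and_or.mp hx with hx | hx
      · push_neg at hx; subst hx; exact hfa
      · push_neg at hx; subst hx; exact hfb
    set τ := f.subtypePerm (p := fun x => x ≠ a ∧ x ≠ b) (fun x => (hstable x).symm) with hτdef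
    have hofτ : ofSubtype τ = f :=
      ofSubtype_subtypePerm _ (fun x hx => by
        by_contra hc
        exact hx (hstable' x hc))
    have hσeq : σ = swap a b * ofSubtype τ := by
      rw [hofτ, hfdef, ← mul_assoc, swap_mul_self, one_mul]
    have hτfp : ∀ i, τ i ≠ i := by
      rintro ⟨x, hx1, hx2⟩ hc
      have : f x = x := congrArg Subtype.val hc
      rw [hfdef, mul_apply] at this
      have hσx : σ x ≠ x := hfp x
      by_cases h : σ x = a
      · have : x = b := by rw [← hσb] at h; exact σ.injective h
        exact hx2 this
      by_cases h' : σ x = b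
      · rw [h', swap_apply_right] at this
        exact hx1 this.symm
      · rw [swap_apply_of_ne_of_ne h h'] at this
        exact hσx this
    have hτcard : Multiset.card τ.cycleType = k := by
      have h4 := (swap_mul_spec1 a b hab τ).2.2.2
      rw [← hσeq] at h4
      rw [hcard] at h4
      omega
    exact ⟨⟨⟨b, hba⟩, ⟨τ, hτfp, hτcard⟩⟩, Subtype.ext hσeq.symm⟩
  -- now count
  have hcardeq : Nat.card (Σ b : {b : α // b ≠ a}, S b) = Nat.card T1 :=
    Nat.card_congr (Equiv.ofBijective F ⟨hFinj, hFsurj⟩)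
  rw [← hcardeq]
  have hfib : ∀ b : {b : α // b ≠ a},
      Fintype.card {x : α // x ≠ a ∧ x ≠ (b : α)} = Fintype.card (Fin (n - 2)) := by
    intro b
    rw [card_ne_ne a (b : α) (habf b), Fintype.card_fin]
  have hE : (Σ b : {b : α // b ≠ a}, S b)
      ≃ ({b : α // b ≠ a} × {τ : Perm (Fin (n - 2)) //
          (∀ i, τ i ≠ i) ∧ Multiset.card τ.cycleType = k}) := by
    refine (Equiv.sigmaCongrRight (fun b => DEquiv (Fintype.equivOfCardEq (hfib b)) k)).trans
      (Equiv.sigmaEquivProd _ _)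
  rw [Nat.card_congr hE, Nat.card_prod]
  congr 1
  rw [Nat.card_eq_fintype_card, card_ne a]

theorem count_T2 (a : α) (k : ℕ) :
    Nat.card {σ : Perm α //
        ((∀ i, σ i ≠ i) ∧ Multiset.card σ.cycleType = k + 1) ∧ ¬σ (σ a) = a}
      = (Fintype.card α - 1) * D (Fin (Fintype.card α - 1)) (k + 1) := by
  classical
  set n := Fintype.card α with hn
  set T2 := {σ : Perm α //
      ((∀ i, σ i ≠ i) ∧ Multiset.card σ.cycleType = k + 1) ∧ ¬σ (σ a) = a} with hT2
  set SG := {τ : Perm {x : α // x ≠ a} //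
      (∀ i, τ i ≠ i) ∧ Multiset.card τ.cycleType = k + 1} with hSG
  -- facts about ofSubtype on the punctured type
  have hρa : ∀ τ : Perm {x : α // x ≠ a}, ofSubtype τ a = a := fun τ =>
    ofSubtype_apply_of_not_mem τ (by simp)
  have hρval : ∀ (τ : Perm {x : α // x ≠ a}) (y : α) (hy : y ≠ a),
      ofSubtype τ y = (τ ⟨y, hy⟩ : α) := fun τ y hy => ofSubtype_apply_of_mem τ hy
  have hfpρ : ∀ (τ : Perm {x : α // x ≠ a}), (∀ i, τ i ≠ i) →
      ∀ y : α, y ≠ a → ofSubtype τ y ≠ y ∧ ofSubtype τ y ≠ a := by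
    intro τ hτ y hy
    rw [hρval τ y hy]
    refine ⟨fun hc => hτ ⟨y, hy⟩ (Subtype.ext hc), (τ ⟨y, hy⟩).2⟩
  -- the map
  let G : ({b : α // b ≠ a} × SG) → T2 := by
    rintro ⟨⟨b, hba⟩, τ, hτ1, hτ2⟩
    have hab : a ≠ b := hba.symm
    have hρb : ofSubtype τ b ≠ b := (hfpρ τ hτ1 b hba).1
    have hρb' : ofSubtype τ b ≠ a := (hfpρ τ hτ1 b hba).2
    have hσa : (swap a b * ofSubtype τ) a = b := by
      rw [mul_apply, hρa τ, swap_apply_left]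
    refine ⟨swap a b * ofSubtype τ, ⟨⟨?_, ?_⟩, ?_⟩⟩
    · intro y
      by_cases hy : y = a
      · rw [hy, hσa]; exact hba
      · rw [mul_apply]
        obtain ⟨h1, h2⟩ := hfpρ τ hτ1 y hy
        by_cases hyb : ofSubtype τ y = b
        · rw [hyb, swap_apply_right]
          intro hc; exact hy hc.symm
        · rw [swap_apply_of_ne_of_ne h2 hyb]
          exact h1
    · rw [card_cycleType_swap_mul (ofSubtype τ) a b hab (hρa τ) hρb,
        cycleType_ofSubtype]
      exact hτ2
    · rw [hσa, mul_apply]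
      rw [swap_apply_of_ne_of_ne hρb' hρb]
      exact hρb'
  have hGinj : Function.Injective G := by
    rintro ⟨⟨b, hba⟩, τ, hτ1, hτ2⟩ ⟨⟨b', hba'⟩, τ', hτ1', hτ2'⟩ hGG
    have hval : swap a b * ofSubtype τ = swap a b' * ofSubtype τ' :=
      congrArg Subtype.val hGG
    have hσa : (swap a b * ofSubtype τ) a = b := by
      rw [mul_apply, hρa τ, swap_apply_left]
    have hσa' : (swap a b' * ofSubtype τ') a = b' := by
      rw [mul_apply, hρa τ', swap_apply_left]
    have hb : b = b' := by rw [← hσa, ← hσa', hval]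
    subst hb
    have hof : ofSubtype τ = ofSubtype τ' := mul_left_cancel hval
    have hττ : τ = τ' := by
      ext x
      have h1 : ofSubtype τ (x : α) = ofSubtype τ' (x : α) := by rw [hof]
      rw [hρval τ _ x.2, hρval τ' _ x.2] at h1
      have h2 : τ ⟨x.1, x.2⟩ = τ' ⟨x.1, x.2⟩ := Subtype.ext h1
      exact congrArg Subtype.val (by simpa using h2)
    subst hττ
    rfl
  have hGsurj : Function.Surjective G := by
    rintro ⟨σ, ⟨hfp, hcard⟩, hQ⟩
    set b := σ a with hbdef
    have hba : b ≠ a := hfp a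
    have hab : a ≠ b := hba.symm
    have hσb : σ b ≠ a := hQ
    have hσbb : σ b ≠ b := hfp b
    set f := swap a b * σ with hfdef
    have hfa : f a = a := by rw [hfdef, mul_apply, ← hbdef, swap_apply_right]
    have hfb : f b = σ b := by
      rw [hfdef, mul_apply, swap_apply_of_ne_of_ne hσb hσbb]
    have hstable : ∀ x : α, x ≠ a ↔ f x ≠ a := by
      intro x
      constructor
      · exact fun h hc => h (f.injective (hc.trans hfa.symm))
      · intro h hc; rw [hc] at h; exact h hfa
    set τ := f.subtypePerm (p := fun x => x ≠ a) (fun x => (hstable x).symm) with hτdef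
    have hofτ : ofSubtype τ = f :=
      ofSubtype_subtypePerm _ (fun x hx => by
        by_contra hc
        rw [hc] at hx
        exact hx hfa)
    have hσeq : σ = swap a b * ofSubtype τ := by
      rw [hofτ, hfdef, ← mul_assoc, swap_mul_self, one_mul]
    have hτfp : ∀ i, τ i ≠ i := by
      rintro ⟨x, hx⟩ hc
      have hfx : f x = x := congrArg Subtype.val hc
      rw [hfdef, mul_apply] at hfx
      by_cases h : σ x = a
      · rw [h, swap_apply_left] at hfx
        subst hfx
        exact hσb h
      · by_cases h' : σ x = b
        · exact hx (σ.injective (h'.trans hbdef))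
        · rw [swap_apply_of_ne_of_ne h h'] at hfx
          exact hfp x hfx
    have hfbne : ofSubtype τ b ≠ b := by
      rw [hofτ, hfb]; exact hσbb
    have hτcard : Multiset.card τ.cycleType = k + 1 := by
      have hh := card_cycleType_swap_mul (ofSubtype τ) a b hab (hρa τ) hfbne
      rw [← hσeq, hcard, cycleType_ofSubtype] at hh
      exact hh.symm
    exact ⟨⟨⟨b, hba⟩, ⟨τ, hτfp, hτcard⟩⟩, Subtype.ext hσeq.symm⟩
  have hcardeq : Nat.card ({b : α // b ≠ a} × SG) = Nat.card T2 :=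
    Nat.card_congr (Equiv.ofBijective G ⟨hGinj, hGsurj⟩)
  rw [← hcardeq, Nat.card_prod]
  congr 1
  · rw [Nat.card_eq_fintype_card, card_ne a]
  · have hcf : Fintype.card {x : α // x ≠ a} = Fintype.card (Fin (n - 1)) := by
      rw [card_ne a, Fintype.card_fin]
    exact Nat.card_congr (DEquiv (Fintype.equivOfCardEq hcf) (k + 1))

theorem D_rec (a : α) (k : ℕ) :
    D α (k + 1) = (Fintype.card α - 1) * D (Fin (Fintype.card α - 2)) k
      + (Fintype.card α - 1) * D (Fin (Fintype.card α - 1)) (k + 1) := by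
  classical
  rw [← count_T1 a k, ← count_T2 a k]
  rw [show D α (k + 1) = Nat.card {σ : Perm α //
      (∀ i, σ i ≠ i) ∧ Multiset.card σ.cycleType = k + 1} from rfl]
  rw [Nat.card_congr (splitEquiv
    (fun σ : Perm α => (∀ i, σ i ≠ i) ∧ Multiset.card σ.cycleType = k + 1)
    (fun σ => σ (σ a) = a))]
  exact Nat.card_sum

theorem D_eq_zero_of_lt {n k : ℕ} (h : n < 2 * k) : D (Fin n) k = 0 := by
  rw [show D (Fin n) k = Nat.card {σ : Perm (Fin n) //
      (∀ i, σ i ≠ i) ∧ Multiset.card σ.cycleType = k} from rfl]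
  rw [Nat.card_eq_zero]
  left
  constructor
  rintro ⟨σ, hfp, hcard⟩
  have hsupp : σ.support = univ := by
    apply Finset.eq_univ_iff_forall.mpr
    intro x
    exact mem_support.mpr (hfp x)
  have hsum : σ.cycleType.sum = n := by
    rw [sum_cycleType, hsupp, card_univ, Fintype.card_fin]
  have hle : Multiset.card σ.cycleType • 2 ≤ σ.cycleType.sum :=
    Multiset.card_nsmul_le_sum (fun x hx => two_le_of_mem_cycleType hx)
  rw [hcard, hsum, smul_eq_mul] at hle
  omega

theorem D_fin_zero : D (Fin 0) 0 = 1 := by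
  have hσ : ∀ σ τ : Perm (Fin 0), σ = τ := by
    intro σ τ; ext i; exact i.elim0
  haveI : Unique {σ : Perm (Fin 0) //
      (∀ i, σ i ≠ i) ∧ Multiset.card σ.cycleType = 0} := by
    refine ⟨⟨⟨1, fun i => i.elim0, by simp⟩⟩, fun x => Subtype.ext (hσ _ _)⟩
  exact Nat.card_unique

theorem D_succ_zero (n : ℕ) : D (Fin (n + 1)) 0 = 0 := by
  rw [show D (Fin (n + 1)) 0 = Nat.card {σ : Perm (Fin (n + 1)) //
      (∀ i, σ i ≠ i) ∧ Multiset.card σ.cycleType = 0} from rfl]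
  rw [Nat.card_eq_zero]
  left
  constructor
  rintro ⟨σ, hfp, hcard⟩
  have : σ = 1 := card_cycleType_eq_zero.mp hcard
  exact hfp 0 (by rw [this]; rfl)

theorem LA : ∀ k, D (Fin (2 * k)) k = Nat.doubleFactorial (2 * k - 1) := by
  intro k
  induction k with
  | zero => simpa using D_fin_zero
  | succ k ih =>
    have hrec := D_rec (α := Fin (2 * (k + 1))) ⟨0, by omega⟩ k
    rw [Fintype.card_fin] at hrec
    have h1 : 2 * (k + 1) - 2 = 2 * k := by omega
    have h2 : 2 * (k + 1) - 1 = 2 * k + 1 := by omega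
    rw [h1, h2] at hrec
    rw [hrec, ih, D_eq_zero_of_lt (by omega)]
    have h3 : 2 * (k + 1) - 1 = (2 * k - 1) + 2 ∨ k = 0 := by omega
    rcases h3 with h3 | rfl
    · rw [h3, Nat.doubleFactorial_add_two]
      have : 2 * k - 1 + 2 = 2 * k + 1 := by omega
      rw [this]
      ring
    · simp [Nat.doubleFactorial]

theorem LB : ∀ k, 3 * D (Fin (2 * k + 1)) k = 2 * k * Nat.doubleFactorial (2 * k + 1) := by
  intro k
  induction k with
  | zero =>
    have : D (Fin 1) 0 = 0 := D_succ_zero 0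
    simpa using this
  | succ k ih =>
    have hrec := D_rec (α := Fin (2 * (k + 1) + 1)) ⟨0, by omega⟩ k
    rw [Fintype.card_fin] at hrec
    have h1 : 2 * (k + 1) + 1 - 2 = 2 * k + 1 := by omega
    have h2 : 2 * (k + 1) + 1 - 1 = 2 * (k + 1) := by omega
    rw [h1, h2] at hrec
    have hA := LA (k + 1)
    have h3 : 2 * (k + 1) - 1 = 2 * k + 1 := by omega
    rw [h3] at hA
    rw [hrec, hA]
    have h4 : 2 * (k + 1) + 1 = (2 * k + 1) + 2 := by omega
    rw [h4, Nat.doubleFactorial_add_two]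
    -- 3 * ((2k+2) * B + (2k+2) * dd) = 2(k+1) * ((2k+3) * dd) using 3B = 2k*dd
    nlinarith [ih, Nat.doubleFactorial (2 * k + 1)]

theorem LC : ∀ k, 9 * D (Fin (2 * k + 2)) k
    = (4 * k + 5) * (k + 1) * k * Nat.doubleFactorial (2 * k + 1) := by
  intro k
  induction k with
  | zero =>
    have : D (Fin 2) 0 = 0 := D_succ_zero 1
    simpa using this
  | succ k ih =>
    have hrec := D_rec (α := Fin (2 * (k + 1) + 2)) ⟨0, by omega⟩ k
    rw [Fintype.card_fin] at hrec
    have h1 : 2 * (k + 1) + 2 - 2 = 2 * k + 2 := by omega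
    have h2 : 2 * (k + 1) + 2 - 1 = 2 * (k + 1) + 1 := by omega
    rw [h1, h2] at hrec
    have hB := LB (k + 1)
    have h4 : 2 * (k + 1) + 1 = (2 * k + 1) + 2 := by omega
    rw [hrec]
    rw [h4, Nat.doubleFactorial_add_two] at hB ⊢
    nlinarith [ih, hB, Nat.doubleFactorial (2 * k + 1)]

end Main

/-- `dStir n k` : the number of fixed-point-free permutations of an `n`-element set with
exactly `k` cycles (the unsigned associated Stirling number of the first kind). -/
noncomputable def dStir (n k : ℕ) : ℕ :=
  Nat.card {σ : Equiv.Perm (Fin n) // (∀ i, σ i ≠ i) ∧ Multiset.card σ.cycleType = k}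

/-- `stirling2 n m` : the Stirling number of the second kind, the number of partitions of an
`n`-element set into `m` nonempty blocks. -/
noncomputable def stirling2 (n m : ℕ) : ℕ :=
  Nat.card {P : Finpartition (Finset.univ : Finset (Fin n)) // P.parts.card = m}

theorem dStir_eq_D (n k : ℕ) : dStir n k = D (Fin n) k := rfl

theorem stmt6 (k : ℕ) :
    (dStir (2 * k + 2) k : ℚ)
      = 1 / 9 * (4 * k + 5) * (k + 1) * k * Nat.doubleFactorial (2 * k + 1) := by
  have h := LC k
  rw [← dStir_eq_D] at h
  have h' : ((9 * dStir (2 * k + 2) k : ℕ) : ℚ)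
      = (((4 * k + 5) * (k + 1) * k * Nat.doubleFactorial (2 * k + 1) : ℕ) : ℚ) := by
    exact_mod_cast congrArg (Nat.cast : ℕ → ℚ) h
  push_cast at h'
  linear_combination h' / 9
end

section
/- For formal variables, ∑ over compositions (j_1,...,j_k) of m with j_i ≥ 1 of ∏_{i=1}^k (1+y^{j_i})/(j_i+1) equals ∑_{ℓ=0}^{m} y^ℓ · ∑_{p=0}^{k} C(k,p) · H(ℓ,p) · H(m-ℓ,k-p), as polynomials in y over ℚ. -/
/-- Compositions of `m` into `k` positive parts, as functions `Fin k → ℕ`. -/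
def comps (m k : ℕ) : Finset (Fin k → ℕ) :=
  (Fintype.piFinset fun _ => Finset.Icc 1 m).filter fun j => ∑ i, j i = m

/-- `Hsum m k = ∑_{j₁+⋯+j_k = m, jᵢ ≥ 1} ∏ᵢ 1/(jᵢ+1)`. -/
def Hsum (m k : ℕ) : ℚ :=
  ∑ j ∈ comps m k, ∏ i, ((j i : ℚ) + 1)⁻¹

/-- `Hsum` extended to an integer first argument (zero for negative arguments). -/
def Hsum' (m : ℤ) (k : ℕ) : ℚ :=
  if 0 ≤ m then Hsum m.toNat k else 0

/-- compositions of `ℓ` supported on a subset `s` of `Fin k`. -/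
def compsOn {k : ℕ} (s : Finset (Fin k)) (ℓ : ℕ) : Finset (Fin k → ℕ) :=
  (Fintype.piFinset fun i => if i ∈ s then Finset.Icc 1 ℓ else {0}).filter
    fun j => ∑ i ∈ s, j i = ℓ

def HsumOn {k : ℕ} (s : Finset (Fin k)) (ℓ : ℕ) : ℚ :=
  ∑ j ∈ compsOn s ℓ, ∏ i ∈ s, ((j i : ℚ) + 1)⁻¹

lemma mem_compsOn {k : ℕ} {s : Finset (Fin k)} {ℓ : ℕ} {j : Fin k → ℕ} :
    j ∈ compsOn s ℓ ↔ (∀ i ∈ s, 1 ≤ j i ∧ j i ≤ ℓ) ∧ (∀ i ∉ s, j i = 0)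
      ∧ ∑ i ∈ s, j i = ℓ := by
  simp only [compsOn, Finset.mem_filter, Fintype.mem_piFinset]
  constructor
  · rintro ⟨h1, h2⟩
    refine ⟨fun i hi => ?_, fun i hi => ?_, h2⟩
    · have := h1 i; rw [if_pos hi] at this; simpa [Finset.mem_Icc] using this
    · have := h1 i; rw [if_neg hi] at this; simpa using this
  · rintro ⟨h1, h2, h3⟩
    refine ⟨fun i => ?_, h3⟩
    by_cases hi : i ∈ s
    · rw [if_pos hi]; simpa [Finset.mem_Icc] using h1 i hi
    · rw [if_neg hi]; simpa using h2 i hi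

lemma mem_comps {m k : ℕ} {j : Fin k → ℕ} :
    j ∈ comps m k ↔ (∀ i, 1 ≤ j i ∧ j i ≤ m) ∧ ∑ i, j i = m := by
  simp [comps, Fintype.mem_piFinset, Finset.mem_Icc, forall_and]

lemma hsumOn_eq {k : ℕ} (s : Finset (Fin k)) (ℓ : ℕ) :
    HsumOn s ℓ = Hsum ℓ s.card := by
  classical
  set e := s.orderIsoOfFin rfl with he
  unfold HsumOn Hsum
  refine Finset.sum_nbij' (fun j a => j (e a))
    (fun u x => if h : x ∈ s then u (e.symm ⟨x, h⟩) else 0) ?_ ?_ ?_ ?_ ?_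
  · intro j hj
    rw [mem_compsOn] at hj
    rw [mem_comps]
    constructor
    · intro a
      simpa using hj.1 _ (e a).2
    · rw [← hj.2.2, ← Finset.sum_coe_sort s j]
      exact Fintype.sum_equiv e.toEquiv _ _ (fun a => rfl)
  · intro u hu
    rw [mem_comps] at hu
    rw [mem_compsOn]
    refine ⟨fun i hi => ?_, fun i hi => by simp [hi], ?_⟩
    · rw [dif_pos hi]; exact hu.1 _
    · rw [← hu.2, ← Finset.sum_coe_sort s]
      refine Fintype.sum_equiv e.toEquiv.symm _ u fun x => ?_
      rw [dif_pos x.2, Subtype.eta]; rfl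
  · intro j hj
    rw [mem_compsOn] at hj
    funext x
    dsimp only
    by_cases hx : x ∈ s
    · rw [dif_pos hx]; congr 1; simp
    · rw [dif_neg hx]; exact (hj.2.1 x hx).symm
  · intro u _
    funext a
    dsimp only
    rw [dif_pos (e a).2]
    congr 1
    simp
  · intro j hj
    rw [← Finset.prod_coe_sort s]
    exact (Fintype.prod_equiv e.toEquiv _ _ (fun a => rfl)).symm

lemma split_lemma {m k ℓ : ℕ} (t : Finset (Fin k)) (hℓ : ℓ ≤ m) :
    ∑ j ∈ (comps m k).filter (fun j => ∑ i ∈ t, j i = ℓ), ∏ i, ((j i : ℚ) + 1)⁻¹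
      = HsumOn t ℓ * HsumOn tᶜ (m - ℓ) := by
  classical
  unfold HsumOn
  rw [Finset.sum_mul_sum, ← Finset.sum_product']
  refine Finset.sum_nbij'
    (fun j => (fun i => if i ∈ t then j i else 0, fun i => if i ∈ t then 0 else j i))
    (fun uv i => uv.1 i + uv.2 i) ?_ ?_ ?_ ?_ ?_
  · intro j hj
    rw [Finset.mem_filter, mem_comps] at hj
    obtain ⟨⟨h1, h2⟩, h3⟩ := hj
    have hcompl : ∑ i ∈ tᶜ, j i = m - ℓ := by
      have := Finset.sum_add_sum_compl t j
      omega
    rw [Finset.mem_product]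
    constructor
    · rw [mem_compsOn]
      refine ⟨fun i hi => ?_, fun i hi => by simp [hi], ?_⟩
      · simp only [if_pos hi]
        exact ⟨(h1 i).1, h3 ▸ Finset.single_le_sum (fun _ _ => Nat.zero_le _) hi⟩
      · rw [← h3]
        exact Finset.sum_congr rfl fun i hi => by simp [hi]
    · rw [mem_compsOn]
      refine ⟨fun i hi => ?_, fun i hi => ?_, ?_⟩
      · rw [Finset.mem_compl] at hi
        simp only [if_neg hi]
        exact ⟨(h1 i).1, hcompl ▸ Finset.single_le_sum (fun _ _ => Nat.zero_le _)
          (Finset.mem_compl.mpr hi)⟩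
      · rw [Finset.mem_compl, not_not] at hi
        simp [hi]
      · rw [← hcompl]
        refine Finset.sum_congr rfl fun i hi => ?_
        rw [Finset.mem_compl] at hi
        simp [hi]
  · rintro ⟨u, v⟩ huv
    rw [Finset.mem_product, mem_compsOn, mem_compsOn] at huv
    dsimp only at huv
    obtain ⟨⟨hu1, hu2, hu3⟩, hv1, hv2, hv3⟩ := huv
    have hut : ∀ i ∈ t, v i = 0 := fun i hi => hv2 i (by simp [hi])
    have hvt : ∀ i ∉ t, u i = 0 := fun i hi => hu2 i hi
    have hst : ∑ i ∈ t, (u i + v i) = ℓ := by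
      rw [← hu3]; exact Finset.sum_congr rfl fun i hi => by rw [hut i hi, add_zero]
    have hsc : ∑ i ∈ tᶜ, (u i + v i) = m - ℓ := by
      rw [← hv3]
      exact Finset.sum_congr rfl fun i hi => by
        rw [hvt i (Finset.mem_compl.mp hi)]; omega
    rw [Finset.mem_filter, mem_comps]
    dsimp only
    refine ⟨⟨fun i => ?_, ?_⟩, hst⟩
    · by_cases hi : i ∈ t
      · have h := hu1 i hi
        have := hut i hi
        omega
      · have h := hv1 i (Finset.mem_compl.mpr hi)
        have := hvt i hi
        omega
    · rw [← Finset.sum_add_sum_compl t, hst, hsc]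
      omega
  · intro j hj
    funext i
    by_cases hi : i ∈ t <;> simp [hi]
  · rintro ⟨u, v⟩ huv
    rw [Finset.mem_product, mem_compsOn, mem_compsOn] at huv
    dsimp only at huv
    obtain ⟨⟨hu1, hu2, hu3⟩, hv1, hv2, hv3⟩ := huv
    have hut : ∀ i ∈ t, v i = 0 := fun i hi => hv2 i (by simp [hi])
    ext i <;> dsimp only <;> by_cases hi : i ∈ t
    · simp [hi, hut i hi]
    · simp [hi, hu2 i hi]
    · simp [hi, hut i hi]
    · simp [hi, hu2 i hi]
  · intro j hj
    dsimp only
    rw [← Finset.prod_mul_prod_compl t fun i => ((j i : ℚ) + 1)⁻¹]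
    congr 1
    · exact Finset.prod_congr rfl fun i hi => by simp [hi]
    · exact Finset.prod_congr rfl fun i hi => by
        rw [Finset.mem_compl] at hi; simp [hi]

open Polynomial in
theorem stmt7 (m k : ℕ) :
    ∑ j ∈ comps m k, ∏ i, Polynomial.C (((j i : ℚ) + 1)⁻¹) * (1 + X ^ (j i))
      = ∑ ℓ ∈ Finset.range (m + 1),
          Polynomial.C (∑ p ∈ Finset.range (k + 1),
              (k.choose p : ℚ) * Hsum ℓ p * Hsum (m - ℓ) (k - p)) * X ^ ℓ := by
  classical
  have step1 : ∀ j : Fin k → ℕ,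
      (∏ i, Polynomial.C (((j i : ℚ) + 1)⁻¹) * (1 + X ^ (j i)))
        = ∑ t ∈ (Finset.univ : Finset (Fin k)).powerset,
            Polynomial.C (∏ i, ((j i : ℚ) + 1)⁻¹) * X ^ (∑ i ∈ t, j i) := by
    intro j
    have hx : (∏ i, (1 + X ^ (j i)) : ℚ[X])
        = ∑ t ∈ (Finset.univ : Finset (Fin k)).powerset, X ^ (∑ i ∈ t, j i) := by
      simp_rw [add_comm (1 : ℚ[X])]
      rw [Finset.prod_add]
      exact Finset.sum_congr rfl fun t ht => by
        rw [Finset.prod_const_one, mul_one, Finset.prod_pow_eq_pow_sum]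
    rw [Finset.prod_mul_distrib, ← map_prod, hx, Finset.mul_sum]
  have key : ∀ t : Finset (Fin k),
      ∑ j ∈ comps m k, Polynomial.C (∏ i, ((j i : ℚ) + 1)⁻¹) * X ^ (∑ i ∈ t, j i)
        = ∑ ℓ ∈ Finset.range (m + 1),
            Polynomial.C (Hsum ℓ t.card * Hsum (m - ℓ) (k - t.card)) * X ^ ℓ := by
    intro t
    have hmaps : ∀ j ∈ comps m k, (∑ i ∈ t, j i) ∈ Finset.range (m + 1) := by
      intro j hj
      rw [mem_comps] at hj
      rw [Finset.mem_range, Nat.lt_succ_iff, ← hj.2]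
      exact Finset.sum_le_sum_of_subset (Finset.subset_univ t)
    rw [← Finset.sum_fiberwise_of_maps_to hmaps]
    refine Finset.sum_congr rfl fun ℓ hℓ => ?_
    rw [Finset.mem_range, Nat.lt_succ_iff] at hℓ
    have : ∑ j ∈ (comps m k).filter (fun j => ∑ i ∈ t, j i = ℓ),
        Polynomial.C (∏ i, ((j i : ℚ) + 1)⁻¹) * X ^ (∑ i ∈ t, j i)
          = (∑ j ∈ (comps m k).filter (fun j => ∑ i ∈ t, j i = ℓ),
              Polynomial.C (∏ i, ((j i : ℚ) + 1)⁻¹)) * X ^ ℓ := by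
      rw [Finset.sum_mul]
      exact Finset.sum_congr rfl fun j hj => by
        rw [(Finset.mem_filter.mp hj).2]
    rw [this, ← map_sum, split_lemma t hℓ, hsumOn_eq, hsumOn_eq, Finset.card_compl,
      Fintype.card_fin]
  calc ∑ j ∈ comps m k, ∏ i, Polynomial.C (((j i : ℚ) + 1)⁻¹) * (1 + X ^ (j i))
      = ∑ t ∈ (Finset.univ : Finset (Fin k)).powerset, ∑ j ∈ comps m k,
          Polynomial.C (∏ i, ((j i : ℚ) + 1)⁻¹) * X ^ (∑ i ∈ t, j i) := by
        rw [Finset.sum_comm]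
        exact Finset.sum_congr rfl fun j _ => step1 j
    _ = ∑ t ∈ (Finset.univ : Finset (Fin k)).powerset, ∑ ℓ ∈ Finset.range (m + 1),
          Polynomial.C (Hsum ℓ t.card * Hsum (m - ℓ) (k - t.card)) * X ^ ℓ :=
        Finset.sum_congr rfl fun t _ => key t
    _ = ∑ ℓ ∈ Finset.range (m + 1),
          Polynomial.C (∑ t ∈ (Finset.univ : Finset (Fin k)).powerset,
            Hsum ℓ t.card * Hsum (m - ℓ) (k - t.card)) * X ^ ℓ := by
        rw [Finset.sum_comm]
        exact Finset.sum_congr rfl fun ℓ _ => by rw [map_sum, Finset.sum_mul]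
    _ = ∑ ℓ ∈ Finset.range (m + 1),
          Polynomial.C (∑ p ∈ Finset.range (k + 1),
              (k.choose p : ℚ) * Hsum ℓ p * Hsum (m - ℓ) (k - p)) * X ^ ℓ := by
        refine Finset.sum_congr rfl fun ℓ _ => ?_
        congr 1
        congr 1
        have hmaps : ∀ t ∈ (Finset.univ : Finset (Fin k)).powerset,
            t.card ∈ Finset.range (k + 1) := fun t _ => by
          rw [Finset.mem_range, Nat.lt_succ_iff]
          simpa using Finset.card_le_univ t
        rw [← Finset.sum_fiberwise_of_maps_to hmaps]
        refine Finset.sum_congr rfl fun p hp => ?_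
        have hset : (Finset.univ : Finset (Fin k)).powerset.filter (fun t => t.card = p)
            = Finset.powersetCard p (Finset.univ : Finset (Fin k)) :=
          Finset.powersetCard_eq_filter.symm
        rw [hset]
        have hconst : ∑ t ∈ Finset.powersetCard p (Finset.univ : Finset (Fin k)),
            Hsum ℓ t.card * Hsum (m - ℓ) (k - t.card)
            = ∑ _t ∈ Finset.powersetCard p (Finset.univ : Finset (Fin k)),
              Hsum ℓ p * Hsum (m - ℓ) (k - p) :=
          Finset.sum_congr rfl fun t ht => by rw [(Finset.mem_powersetCard.mp ht).2]
        rw [hconst]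
        rw [Finset.sum_const, Finset.card_powersetCard, Finset.card_univ, Fintype.card_fin,
          nsmul_eq_mul, mul_assoc]
end
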